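/- Let U be a nonempty finite type, let X take values in {A,B}, and let Q take values in {qA, qB, qAB} with lengths ℓ(qA)=ℓ(qB)=1, ℓ(qAB)=2. Let p be a joint pmf of (U,X,Q) with P(U=u)>0 for every u, satisfying decodability (P(X=A, Q=qB)=0 and P(X=B, Q=qA)=0) and privacy (Q independent of U). Suppose in addition that X is a deterministic function of U, i.e. X = f(U) almost surely for some f, and that both P(X=A) > 0 and P(X=B) > 0. Then E[ℓ(Q)] = 2; equivalently, P(Q = qAB) = 1. -/

import Mathlib

/-- The two sources. -/
inductive Src | A | B
deriving DecidableEq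

instance : Fintype Src := ⟨{Src.A, Src.B}, fun x => by cases x <;> simp⟩

/-- The three possible queries: only source A, only source B, or both. -/
inductive Qry | qA | qB | qAB
deriving DecidableEq

instance : Fintype Qry := ⟨{Qry.qA, Qry.qB, Qry.qAB}, fun x => by cases x <;> simp⟩

/-- The length (download cost) of each query. -/
noncomputable def len : Qry → ℝ
  | Qry.qA => 1
  | Qry.qB => 1
  | Qry.qAB => 2

/-!
Since `X = f(U)` almost surely, all mass sits on the graph of `f`. If some `u` requests `B`
with positive probability, then at that `u` the query `qA` has probability zero: the request
is `B`, and decodability excludes `(B, qA)`. As `P(U = u) > 0`, independence of `Q` and `U`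
forces `P(Q = qA) = 0`. Symmetrically `P(Q = qB) = 0`, so `Q = qAB` almost surely.
-/

open Finset

section

variable {U X Q : Type*} [Fintype U] [Fintype X] [Fintype Q] {p : U → X → Q → ℝ}

theorem eq_zero_of_ne_of_sum_graph_eq_one (hnn : ∀ u x q, 0 ≤ p u x q)
    (hsum : ∑ u, ∑ x, ∑ q, p u x q = 1) {f : U → X} (hdet : ∑ u, ∑ q, p u (f u) q = 1)
    {u : U} {x : X} (hx : x ≠ f u) (q : Q) : p u x q = 0 := by
  classical
  have hsplit u := add_sum_erase univ (fun x => ∑ q, p u x q) (mem_univ (f u))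
  have hoff : ∑ u, ∑ x ∈ univ.erase (f u), ∑ q, p u x q = 0 := by
    simp_rw [← hsplit, sum_add_distrib] at hsum
    linarith
  have hnn₂ u x : 0 ≤ ∑ q, p u x q := sum_nonneg fun q _ => hnn u x q
  have hu := (sum_eq_zero_iff_of_nonneg fun u _ => sum_nonneg fun x _ => hnn₂ u x).1 hoff u
    (mem_univ u)
  have hux := (sum_eq_zero_iff_of_nonneg fun x _ => hnn₂ u x).1 hu x
    (mem_erase.2 ⟨hx, mem_univ x⟩)
  exact (sum_eq_zero_iff_of_nonneg fun q _ => hnn u x q).1 hux q (mem_univ q)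

theorem sum_sum_eq_zero_of_indep_of_graph (hnn : ∀ u x q, 0 ≤ p u x q)
    (hpriv : ∀ u q, ∑ x, p u x q = (∑ x, ∑ q', p u x q') * (∑ u', ∑ x, p u' x q))
    {f : U → X} (hgraph : ∀ u x q, x ≠ f u → p u x q = 0) {x₀ : X} {q₀ : Q}
    (hx₀ : 0 < ∑ u, ∑ q, p u x₀ q) (hdec : ∑ u, p u x₀ q₀ = 0) :
    ∑ u, ∑ x, p u x q₀ = 0 := by
  obtain ⟨u, -, hu⟩ := exists_ne_zero_of_sum_ne_zero hx₀.ne'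
  have hfu : f u = x₀ := by
    by_contra h
    exact hu (sum_eq_zero fun q _ => hgraph u x₀ q (Ne.symm h))
  have hU : 0 < ∑ x, ∑ q, p u x q :=
    (lt_of_le_of_ne (sum_nonneg fun q _ => hnn u x₀ q) (Ne.symm hu)).trans_le
      (single_le_sum (fun x _ => sum_nonneg fun q _ => hnn u x q) (mem_univ x₀))
  have hq₀ : ∑ x, p u x q₀ = 0 := by
    rw [sum_eq_single (f u) (fun x _ hx => hgraph u x q₀ hx) (by simp), hfu]
    exact (sum_eq_zero_iff_of_nonneg fun u _ => hnn u x₀ q₀).1 hdec u (mem_univ u)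
  have h := hpriv u q₀
  rw [hq₀] at h
  exact (mul_eq_zero.1 h.symm).resolve_left hU.ne'

end

theorem Qry.sum_eq (g : Qry → ℝ) : ∑ q, g q = g Qry.qA + g Qry.qB + g Qry.qAB := by
  rw [show (univ : Finset Qry) = {Qry.qA, Qry.qB, Qry.qAB} from rfl]
  simp [add_assoc]

theorem sum_len_eq_two_of_qA_qB_null {U X : Type*} [Fintype U] [Fintype X]
    {p : U → X → Qry → ℝ} (hsum : ∑ u, ∑ x, ∑ q, p u x q = 1)
    (hqA : ∑ u, ∑ x, p u x Qry.qA = 0) (hqB : ∑ u, ∑ x, p u x Qry.qB = 0) :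
    (∑ u, ∑ x, ∑ q, p u x q * len q = 2) ∧ (∑ u, ∑ x, p u x Qry.qAB = 1) := by
  have hswap (g : U → X → Qry → ℝ) :
      ∑ u, ∑ x, ∑ q, g u x q = ∑ q, ∑ u, ∑ x, g u x q := by
    simp_rw [sum_comm (t := (univ : Finset Qry)) (s := (univ : Finset X))]
    exact sum_comm
  rw [hswap, Qry.sum_eq, hqA, hqB] at hsum
  rw [hswap, Qry.sum_eq]
  simp only [← sum_mul, hqA, hqB, len]
  constructor <;> linarith

theorem privacy_on_full_download_general {U : Type} [Fintype U]
    (p : U → Src → Qry → ℝ)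
    (hnn : ∀ u x q, 0 ≤ p u x q)
    (hsum : ∑ u, ∑ x, ∑ q, p u x q = 1)
    (hdecA : ∑ u, p u Src.A Qry.qB = 0)
    (hdecB : ∑ u, p u Src.B Qry.qA = 0)
    (hpriv : ∀ u q, ∑ x, p u x q
      = (∑ x, ∑ q', p u x q') * (∑ u', ∑ x, p u' x q))
    -- X is a deterministic function of U almost surely
    (f : U → Src)
    (hdet : ∑ u, ∑ q, p u (f u) q = 1)
    -- both requests occur with positive probability
    (hA : 0 < ∑ u, ∑ q, p u Src.A q)
    (hB : 0 < ∑ u, ∑ q, p u Src.B q) :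
    (∑ u, ∑ x, ∑ q, p u x q * len q = 2) ∧ (∑ u, ∑ x, p u x Qry.qAB = 1) := by
  have hgraph u x q (hx : x ≠ f u) := eq_zero_of_ne_of_sum_graph_eq_one hnn hsum hdet hx q
  have hqA := sum_sum_eq_zero_of_indep_of_graph hnn hpriv hgraph hB hdecB
  have hqB := sum_sum_eq_zero_of_indep_of_graph hnn hpriv hgraph hA hdecA
  exact sum_len_eq_two_of_qA_qB_null hsum hqA hqB

/-- If additionally `X` is a deterministic function of `U` (privacy is ON) and both values of
`X` occur with positive probability, then decodability and privacy force the user to always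
download both messages: `E[ℓ(Q)] = 2`, equivalently `P(Q = qAB) = 1`. -/
theorem privacy_on_full_download {U : Type} [Fintype U] [Nonempty U]
    (p : U → Src → Qry → ℝ)
    (hnn : ∀ u x q, 0 ≤ p u x q)
    (hsum : ∑ u, ∑ x, ∑ q, p u x q = 1)
    (hUpos : ∀ u, 0 < ∑ x, ∑ q, p u x q)
    (hdecA : ∑ u, p u Src.A Qry.qB = 0)
    (hdecB : ∑ u, p u Src.B Qry.qA = 0)
    (hpriv : ∀ u q, ∑ x, p u x q
      = (∑ x, ∑ q', p u x q') * (∑ u', ∑ x, p u' x q))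
    -- X is a deterministic function of U almost surely
    (f : U → Src)
    (hdet : ∑ u, ∑ q, p u (f u) q = 1)
    -- both requests occur with positive probability
    (hA : 0 < ∑ u, ∑ q, p u Src.A q)
    (hB : 0 < ∑ u, ∑ q, p u Src.B q) :
    (∑ u, ∑ x, ∑ q, p u x q * len q = 2) ∧ (∑ u, ∑ x, p u x Qry.qAB = 1) :=
  privacy_on_full_download_general p hnn hsum hdecA hdecB hpriv f hdet hA hB
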